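/- arXiv:2403.02468 — 2 statements merged into one kernel-verified Lean document; each statement's English description precedes it below -/
import Mathlib

section
/- Let L : ℝ^m → ℝ be convex, 1-coercive (i.e. L(α)/‖α‖ → ∞ as ‖α‖ → ∞), continuous, nonnegative with L(0) = 0, and let a ∈ ℝ^m, p ∈ ℝ. Then sup over α with ⟨a,α⟩ ≥ 0 of (-p⟨a,α⟩ - L(α)) plus sup over α with ⟨a,α⟩ ≤ 0 of (-p⟨a,α⟩ - L(α)) equals sup over all α ∈ ℝ^m of (-p⟨a,α⟩ - L(α)). -/
open Filter Set RealInnerProductSpace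

/-!
The function `g α = -p ⟨a, α⟩ - L α` is concave and nonpositive on the hyperplane `⟨a, α⟩ = 0`.
If it were positive at some `α` with `⟨a, α⟩ ≥ 0` and at some `β` with `⟨a, β⟩ ≤ 0`, then at the
point of the segment `[α, β]` lying on the hyperplane it would be positive as well. So `g ≤ 0`
on one of the two half-spaces, whose supremum is therefore `g 0 = 0`, while the supremum over the
other half-space is the global one.
-/

theorem ConcaveOn.nonpos_on_halfspace_of_nonpos_on_ker {E : Type*} [AddCommGroup E]
    [Module ℝ E] {g : E → ℝ} (hg : ConcaveOn ℝ univ g) (ℓ : E →ₗ[ℝ] ℝ)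
    (hker : ∀ z, ℓ z = 0 → g z ≤ 0) :
    (∀ x, 0 ≤ ℓ x → g x ≤ 0) ∨ (∀ x, ℓ x ≤ 0 → g x ≤ 0) := by
  by_contra! ⟨⟨x, hx, hgx⟩, ⟨y, hy, hgy⟩⟩
  have hzero : (0 : ℝ) ∈ ℓ '' segment ℝ y x := by
    rw [show ⇑ℓ = ℓ.toAffineMap from rfl, image_segment]
    change (0 : ℝ) ∈ segment ℝ (ℓ y) (ℓ x)
    rw [segment_eq_Icc (hy.trans hx)]
    exact ⟨hy, hx⟩
  obtain ⟨z, hz, hℓz⟩ := hzero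
  have hmin := (hg.min_le_of_mem_segment (mem_univ y) (mem_univ x) hz).trans (hker z hℓz)
  exact (lt_min hgy hgx).not_ge hmin

theorem Real.sSup_add_sSup_eq_sSup_union_of_isGreatest_zero {A B : Set ℝ}
    (hA : (0 : ℝ) ∈ A) (hB : IsGreatest B 0) : sSup A + sSup B = sSup (A ∪ B) := by
  rw [hB.csSup_eq, add_zero]
  by_cases hbdd : BddAbove A
  · rw [csSup_union hbdd ⟨0, hA⟩ hB.bddAbove hB.nonempty, hB.csSup_eq,
      max_eq_left (le_csSup hbdd hA)]
  · -- both sides are the junk value `sSup = 0` of sets unbounded above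
    rw [Real.sSup_of_not_bddAbove hbdd,
      Real.sSup_of_not_bddAbove fun h => hbdd (h.mono subset_union_left)]

theorem upwind_consistency_1d_general {m : ℕ}
    (L : EuclideanSpace ℝ (Fin m) → ℝ) (a : EuclideanSpace ℝ (Fin m)) (p : ℝ)
    (hconv : ConvexOn ℝ Set.univ L)
    (hnonneg : ∀ α, 0 ≤ L α)
    (hL0 : L 0 = 0) :
    sSup ((fun α => -p * ⟪a, α⟫ - L α) '' {α | 0 ≤ ⟪a, α⟫})
      + sSup ((fun α => -p * ⟪a, α⟫ - L α) '' {α | ⟪a, α⟫ ≤ 0})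
      = sSup (Set.range (fun α => -p * ⟪a, α⟫ - L α)) := by
  set g : EuclideanSpace ℝ (Fin m) → ℝ := fun α => -p * ⟪a, α⟫ - L α
  have hg : ConcaveOn ℝ univ g := (((-p) • innerₗ _ a).concaveOn convex_univ).sub hconv
  have hside := hg.nonpos_on_halfspace_of_nonpos_on_ker (innerₗ _ a) fun z hz => by
    rw [innerₗ_apply_apply] at hz
    simp [g, hz, hnonneg]
  have hg0 : g 0 = 0 := by simp [g, hL0]
  have hcover : {α | 0 ≤ ⟪a, α⟫} ∪ {α | ⟪a, α⟫ ≤ 0} = univ :=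
    eq_univ_of_forall fun α => le_total 0 ⟪a, α⟫
  rw [← image_univ, ← hcover, image_union]
  rcases hside with hpos | hneg
  · rw [add_comm, union_comm]
    exact Real.sSup_add_sSup_eq_sSup_union_of_isGreatest_zero ⟨0, by simp, hg0⟩
      ⟨⟨0, by simp, hg0⟩, forall_mem_image.2 hpos⟩
  · exact Real.sSup_add_sSup_eq_sSup_union_of_isGreatest_zero ⟨0, by simp, hg0⟩
      ⟨⟨0, by simp, hg0⟩, forall_mem_image.2 hneg⟩

/-- One-dimensional consistency of the upwind numerical Hamiltonian:
`h₊ + h₋ = H(p)`. -/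
theorem upwind_consistency_1d {m : ℕ}
    (L : EuclideanSpace ℝ (Fin m) → ℝ) (a : EuclideanSpace ℝ (Fin m)) (p : ℝ)
    (hconv : ConvexOn ℝ Set.univ L)
    (hcoer : Tendsto (fun α => L α / ‖α‖) (cocompact (EuclideanSpace ℝ (Fin m))) atTop)
    (hcont : Continuous L)
    (hnonneg : ∀ α, 0 ≤ L α)
    (hL0 : L 0 = 0) :
    sSup ((fun α => -p * ⟪a, α⟫ - L α) '' {α | 0 ≤ ⟪a, α⟫})
      + sSup ((fun α => -p * ⟪a, α⟫ - L α) '' {α | ⟪a, α⟫ ≤ 0})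
      = sSup (Set.range (fun α => -p * ⟪a, α⟫ - L α)) :=
  upwind_consistency_1d_general L a p hconv hnonneg hL0
end

section
/- Let a ∈ ℝ^m, p ∈ ℝ, and L : ℝ^m → ℝ convex, continuous, 1-coercive, nonnegative with L(0) = 0. Set h₊ = sup over α with ⟨a,α⟩ ≥ 0 of (-p⟨a,α⟩ - L(α)) and H(p) = sup over all α of (-p⟨a,α⟩ - L(α)). Then h₊ ∈ {0, H(p)}: either the maximizer set of H intersects {⟨a,α⟩ ≥ 0}, in which case h₊ = H(p), or it does not, in which case h₊ = 0. -/
/-!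
Let `F α = -p ⟪a, α⟫ - L α`, a concave function tending to `-∞` at infinity. At a point of the
open half-space `⟪a, α⟫ > 0`, a maximizer of `F` over the closed half-space is a local, hence
global, maximizer of `F`. So if no global maximizer lies in the closed half-space, the half-space
maximum (attained by coercivity) sits on the hyperplane `⟪a, α⟫ = 0`, where `F = -L ≤ 0 = F 0`.
-/

open Filter Set Topology RealInnerProductSpace

theorem IsMaxOn.csSup_image_eq {α β : Type*} [ConditionallyCompleteLinearOrder α] {f : β → α}
    {s : Set β} {x : β} (hx : x ∈ s) (h : IsMaxOn f s x) : sSup (f '' s) = f x :=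
  sSup_image'.trans (h.iSup_eq hx)

theorem IsMaxOn.isMaxOn_univ_of_concaveOn {E : Type*} [AddCommGroup E] [TopologicalSpace E]
    [Module ℝ E] [IsTopologicalAddGroup E] [ContinuousSMul ℝ E]
    {f : E → ℝ} {s : Set E} {x : E}
    (hf : ConcaveOn ℝ univ f) (h : IsMaxOn f s x) (hs : s ∈ 𝓝 x) : IsMaxOn f univ x :=
  isMaxOn_univ_iff.2 (IsMaxOn.of_isLocalMax_of_convex_univ (h.isLocalMax hs) hf)

theorem tendsto_sub_cocompact_atBot_of_superlinear {E : Type*} [NormedAddCommGroup E]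
    [ProperSpace E] {L g : E → ℝ} {C : ℝ}
    (hL : Tendsto (fun x => L x / ‖x‖) (cocompact E) atTop) (hg : ∀ x, g x ≤ C * ‖x‖) :
    Tendsto (fun x => g x - L x) (cocompact E) atBot := by
  have hnorm : Tendsto (fun x : E => -‖x‖) (cocompact E) atBot :=
    tendsto_neg_atBot_iff.2 tendsto_norm_cocompact_atTop
  refine tendsto_atBot_mono' _ ?_ hnorm
  filter_upwards [hL.eventually_ge_atTop (C + 1),
    tendsto_norm_cocompact_atTop.eventually_gt_atTop 0] with x hLx hx
  have := (le_div_iff₀ hx).1 hLx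
  linarith [hg x]

section InnerProductSpace

variable {E : Type*} [NormedAddCommGroup E] [InnerProductSpace ℝ E]
  (L : E → ℝ) (a : E) (p : ℝ)

theorem concaveOn_neg_mul_inner_sub (hconv : ConvexOn ℝ univ L) :
    ConcaveOn ℝ univ (fun α => -p * ⟪a, α⟫ - L α) := by
  have hlin : ConcaveOn ℝ univ (fun α => -p * ⟪a, α⟫) :=
    ((-p) • innerₛₗ ℝ a).concaveOn convex_univ
  exact hlin.sub hconv

theorem tendsto_neg_mul_inner_sub_cocompact_atBot [ProperSpace E]
    (hcoer : Tendsto (fun α => L α / ‖α‖) (cocompact E) atTop) :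
    Tendsto (fun α => -p * ⟪a, α⟫ - L α) (cocompact E) atBot := by
  refine tendsto_sub_cocompact_atBot_of_superlinear hcoer (C := |p| * ‖a‖) fun α => ?_
  calc -p * ⟪a, α⟫ ≤ |p| * |⟪a, α⟫| := by
        rw [← abs_neg p, ← abs_mul]; exact le_abs_self _
    _ ≤ |p| * (‖a‖ * ‖α‖) := by gcongr; exact abs_real_inner_le_norm a α
    _ = |p| * ‖a‖ * ‖α‖ := by ring

end InnerProductSpace

/-- Dichotomy: the half-space supremum `h₊` equals `H(p)` if the argmax set meets the
half-space, and equals `0` otherwise. -/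
theorem halfspace_sup_dichotomy {m : ℕ}
    (L : EuclideanSpace ℝ (Fin m) → ℝ) (a : EuclideanSpace ℝ (Fin m)) (p : ℝ)
    (hconv : ConvexOn ℝ Set.univ L)
    (hcont : Continuous L)
    (hcoer : Tendsto (fun α => L α / ‖α‖) (cocompact (EuclideanSpace ℝ (Fin m))) atTop)
    (hnonneg : ∀ α, 0 ≤ L α)
    (hL0 : L 0 = 0) :
    (({α | ∀ β, -p * ⟪a, β⟫ - L β ≤ -p * ⟪a, α⟫ - L α} ∩ {α | 0 ≤ ⟪a, α⟫}).Nonempty →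
      sSup ((fun α => -p * ⟪a, α⟫ - L α) '' {α | 0 ≤ ⟪a, α⟫})
        = sSup (Set.range (fun α => -p * ⟪a, α⟫ - L α))) ∧
    (¬ ({α | ∀ β, -p * ⟪a, β⟫ - L β ≤ -p * ⟪a, α⟫ - L α} ∩ {α | 0 ≤ ⟪a, α⟫}).Nonempty →
      sSup ((fun α => -p * ⟪a, α⟫ - L α) '' {α | 0 ≤ ⟪a, α⟫}) = 0) := by
  set F : EuclideanSpace ℝ (Fin m) → ℝ := fun α => -p * ⟪a, α⟫ - L α with hF
  have hFcont : Continuous F := by fun_prop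
  have hF0 : F 0 = 0 := by simp [hF, hL0]
  constructor
  · rintro ⟨α, hglob, hα⟩
    have hmax : IsMaxOn F univ α := isMaxOn_univ_iff.2 hglob
    rw [(hmax.on_subset (subset_univ _)).csSup_image_eq hα, ← image_univ,
      hmax.csSup_image_eq (mem_univ α)]
  · intro hnone
    have hclosed : IsClosed {α | 0 ≤ ⟪a, α⟫} := isClosed_le continuous_const (by fun_prop)
    have hbot : ∀ᶠ α in cocompact _ ⊓ 𝓟 {α | 0 ≤ ⟪a, α⟫}, F α ≤ F 0 :=
      hF0 ▸ ((tendsto_neg_mul_inner_sub_cocompact_atBot L a p hcoer).eventually_le_atBot 0)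
        |>.filter_mono inf_le_left
    obtain ⟨α, hα, hmax⟩ := hFcont.continuousOn.exists_isMaxOn' hclosed (by simp) hbot
    have hα0 : ⟪a, α⟫ = 0 := by
      by_contra hne
      have hnhds : {α | 0 ≤ ⟪a, α⟫} ∈ 𝓝 α :=
        (continuous_const.inner continuous_id).continuousAt.preimage_mem_nhds
          (Ici_mem_nhds (hα.lt_of_ne' hne))
      exact hnone ⟨α, isMaxOn_univ_iff.1 <|
        hmax.isMaxOn_univ_of_concaveOn (concaveOn_neg_mul_inner_sub L a p hconv) hnhds, hα⟩
    rw [hmax.csSup_image_eq hα]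
    have hle : F α ≤ 0 := by simp only [hF, hα0, mul_zero, zero_sub, neg_nonpos, hnonneg]
    exact le_antisymm hle (hF0 ▸ hmax (by simp))
end
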